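/- arXiv:1005.0166 — 6 statements merged into one kernel-verified Lean document; each statement's English description precedes it below -/
import Mathlib

section
/- Let A = C + K ∈ L(Y), where C ∈ L(Y) is bijective with C⁻¹ ∈ S(Y), and K ∈ S(Y) ∩ M(Y). Suppose there exist B ∈ L(Y) and T₁, T₂ ∈ SN(Y) such that A∘B = I + T₁ and B∘A = I + T₂. Then A is Fredholm: the kernel of A is finite-dimensional and the range of A is a closed subspace of Y of finite codimension. -/
open Filter Topology

/-- Conditions (i) and (ii) on the approximate identity `P`. -/
def ApproxId {Y : Type*} [NormedAddCommGroup Y] [NormedSpace ℂ Y]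
    (P : ℕ → Y →L[ℂ] Y) : Prop :=
  (∀ x : Y, IsLUB (Set.range fun n => ‖P n x‖) ‖x‖) ∧
  ∀ m : ℕ, ∃ Nm : ℕ, m ≤ Nm ∧ ∀ n, Nm ≤ n →
    (P n).comp (P m) = P m ∧ (P m).comp (P n) = P m

/-- `Q n = I - P n`. -/
def Qop {Y : Type*} [NormedAddCommGroup Y] [NormedSpace ℂ Y]
    (P : ℕ → Y →L[ℂ] Y) (n : ℕ) : Y →L[ℂ] Y :=
  ContinuousLinearMap.id ℂ Y - P n

/-- Strict convergence of a sequence. -/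
def SConv {Y : Type*} [NormedAddCommGroup Y] [NormedSpace ℂ Y]
    (P : ℕ → Y →L[ℂ] Y) (x : ℕ → Y) (x₀ : Y) : Prop :=
  (∃ C : ℝ, ∀ j, ‖x j‖ ≤ C) ∧
  ∀ m : ℕ, Tendsto (fun j => ‖P m (x j - x₀)‖) atTop (𝓝 0)

/-- `S(Y)`: sequentially continuous operators on `(Y,s)`. -/
def MemS {Y : Type*} [NormedAddCommGroup Y] [NormedSpace ℂ Y]
    (P : ℕ → Y →L[ℂ] Y) (A : Y →L[ℂ] Y) : Prop :=
  ∀ (x : ℕ → Y) (x₀ : Y), SConv P x x₀ → SConv P (fun j => A (x j)) (A x₀)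

/-- `SN(Y)`. -/
def MemSN {Y : Type*} [NormedAddCommGroup Y] [NormedSpace ℂ Y]
    (P : ℕ → Y →L[ℂ] Y) (A : Y →L[ℂ] Y) : Prop :=
  ∀ (x : ℕ → Y) (x₀ : Y), SConv P x x₀ →
    Tendsto (fun j => ‖A (x j) - A x₀‖) atTop (𝓝 0)

/-- `M(Y)`: Montel operators. -/
def MemM {Y : Type*} [NormedAddCommGroup Y] [NormedSpace ℂ Y]
    (P : ℕ → Y →L[ℂ] Y) (K : Y →L[ℂ] Y) : Prop :=
  ∀ x : ℕ → Y, (∃ C : ℝ, ∀ j, ‖x j‖ ≤ C) →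
    ∃ (φ : ℕ → ℕ) (y : Y), StrictMono φ ∧ SConv P (fun i => K (x (φ i))) y

/-- `K(Y,P)`. -/
def MemKP {Y : Type*} [NormedAddCommGroup Y] [NormedSpace ℂ Y]
    (P : ℕ → Y →L[ℂ] Y) (K : Y →L[ℂ] Y) : Prop :=
  Tendsto (fun n => ‖K.comp (Qop P n)‖) atTop (𝓝 0) ∧
  Tendsto (fun n => ‖(Qop P n).comp K‖) atTop (𝓝 0)

/-- `L(Y,P)`. -/
def MemLP {Y : Type*} [NormedAddCommGroup Y] [NormedSpace ℂ Y]
    (P : ℕ → Y →L[ℂ] Y) (A : Y →L[ℂ] Y) : Prop :=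
  ∀ K : Y →L[ℂ] Y, MemKP P K → MemKP P (A.comp K) ∧ MemKP P (K.comp A)

/-- Fredholm: finite dimensional kernel, closed range of finite codimension. -/
def IsFredholmOp {E : Type*} [NormedAddCommGroup E] [NormedSpace ℂ E]
    (A : E →L[ℂ] E) : Prop :=
  FiniteDimensional ℂ (LinearMap.ker (A : E →ₗ[ℂ] E)) ∧
  IsClosed (LinearMap.range (A : E →ₗ[ℂ] E) : Set E) ∧
  FiniteDimensional ℂ (E ⧸ LinearMap.range (A : E →ₗ[ℂ] E))

/-!
With `C⁻¹` the inverse of `C`, the operators `L = B - T₂ C⁻¹` and `R = C⁻¹ - B K C⁻¹` invert `A`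
up to compact errors: `L A = I - T₂ C⁻¹ K` and `A R = I - T₁ K C⁻¹`. The errors are compact
because `C⁻¹ K` sends bounded sequences to sequences with strictly convergent subsequences, and an
`SN` operator turns strict convergence into norm convergence.

An operator with compact left and right regularizers is Fredholm. If `L A = I - S`, then `S` is
the identity on `ker A`, which is therefore finite dimensional, and `A` is bounded below on a
closed complement of `ker A`, so its range is closed. If `A R = I - T`, then `y ≡ T y` modulo the
range, so the unit ball of the cokernel lies in the image of a relatively compact set.
-/

open Metric

theorem isCompact_closure_of_forall_exists_subseq_tendsto {X : Type*} [PseudoMetricSpace X]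
    {s : Set X} (hs : ∀ u : ℕ → X, (∀ n, u n ∈ s) →
      ∃ a, ∃ φ : ℕ → ℕ, StrictMono φ ∧ Tendsto (u ∘ φ) atTop (𝓝 a)) :
    IsCompact (closure s) := by
  refine IsSeqCompact.isCompact fun v hv => ?_
  have happrox : ∀ n, ∃ u ∈ s, dist (v n) u < 1 / (n + 1 : ℝ) := fun n =>
    Metric.mem_closure_iff.1 (hv n) _ Nat.one_div_pos_of_nat
  choose u hus hu using happrox
  obtain ⟨a, φ, hφ, hua⟩ := hs u hus
  refine ⟨a, mem_closure_of_tendsto hua (.of_forall fun n => hus (φ n)), φ, hφ, ?_⟩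
  refine hua.congr_dist (squeeze_zero (fun _ => dist_nonneg)
    (fun n => (dist_comm (u (φ n)) _).trans_le (hu (φ n)).le) ?_)
  exact tendsto_one_div_add_atTop_nhds_zero_nat.comp hφ.tendsto_atTop

section StrictTopology

variable {Y : Type*} [NormedAddCommGroup Y] [NormedSpace ℂ Y] {P : ℕ → Y →L[ℂ] Y}

theorem MemS.comp_memM {G K : Y →L[ℂ] Y} (hG : MemS P G) (hK : MemM P K) :
    MemM P (G ∘L K) := fun x hx => by
  obtain ⟨φ, y, hφ, hy⟩ := hK x hx
  exact ⟨φ, G y, hφ, hG _ _ hy⟩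

theorem MemSN.isCompactOperator_comp {T K : Y →L[ℂ] Y} (hT : MemSN P T) (hK : MemM P K) :
    IsCompactOperator (T ∘L K) := by
  refine (isCompactOperator_iff_isCompact_closure_image_closedBall
    ((T ∘L K : Y →L[ℂ] Y) : Y →ₗ[ℂ] Y) one_pos).2
    (isCompact_closure_of_forall_exists_subseq_tendsto fun u hu => ?_)
  choose x hx hxu using hu
  obtain ⟨φ, y, hφ, hy⟩ := hK x ⟨1, fun j => mem_closedBall_zero_iff.1 (hx j)⟩
  refine ⟨T y, φ, hφ, tendsto_iff_norm_sub_tendsto_zero.2 ?_⟩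
  simpa only [Function.comp_apply, ← hxu, ContinuousLinearMap.coe_coe,
    ContinuousLinearMap.comp_apply] using hT _ _ hy

end StrictTopology

section CompactRegularizer

variable {𝕜 E : Type*} [RCLike 𝕜] [NormedAddCommGroup E] [NormedSpace 𝕜 E] {A L S : E →L[𝕜] E}

theorem IsCompactOperator.exists_subseq_tendsto {T : E →L[𝕜] E} (hT : IsCompactOperator T)
    {u : ℕ → E} {r : ℝ} (hu : ∀ n, ‖u n‖ ≤ r) :
    ∃ z, ∃ φ : ℕ → ℕ, StrictMono φ ∧ Tendsto (fun n => T (u (φ n))) atTop (𝓝 z) := by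
  obtain ⟨z, -, φ, hφ, hz⟩ :=
    (hT.isCompact_closure_image_closedBall (f := (T : E →ₗ[𝕜] E)) r).tendsto_subseq
      fun n => subset_closure ⟨u n, mem_closedBall_zero_iff.2 (hu n), rfl⟩
  exact ⟨z, φ, hφ, hz⟩

theorem exists_subseq_tendsto_of_mul_eq_one_sub (hS : IsCompactOperator S) (hL : L * A = 1 - S)
    {u : ℕ → E} {r : ℝ} (hu : ∀ n, ‖u n‖ ≤ r) {y : E}
    (hAu : Tendsto (fun n => A (u n)) atTop (𝓝 y)) :
    ∃ z, ∃ φ : ℕ → ℕ, StrictMono φ ∧ Tendsto (fun n => u (φ n)) atTop (𝓝 z) := by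
  obtain ⟨z, φ, hφ, hz⟩ := hS.exists_subseq_tendsto hu
  have hdecomp : ∀ x, L (A x) + S x = x := fun x => by
    simpa [eq_sub_iff_add_eq] using congr($hL x)
  refine ⟨L y + z, φ, hφ, ?_⟩
  simpa only [Function.comp_apply, hdecomp] using
    ((L.continuous.tendsto y).comp (hAu.comp hφ.tendsto_atTop)).add hz

theorem finiteDimensional_ker_of_mul_eq_one_sub (hS : IsCompactOperator S) (hL : L * A = 1 - S) :
    FiniteDimensional 𝕜 (LinearMap.ker (A : E →ₗ[𝕜] E)) := by
  have hfix : ∀ x ∈ LinearMap.ker (A : E →ₗ[𝕜] E), S x = x := fun x hx => by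
    have hAx : A x = 0 := hx
    have hLA : L (A x) = x - S x := by simpa using congr($hL x)
    rw [hAx, map_zero, eq_comm, sub_eq_zero] at hLA
    exact hLA.symm
  have hmaps : ∀ x ∈ LinearMap.ker (A : E →ₗ[𝕜] E),
      (S : E →ₗ[𝕜] E) x ∈ LinearMap.ker (A : E →ₗ[𝕜] E) :=
    fun x hx => (hfix x hx).symm ▸ hx
  have hid : (S : E →ₗ[𝕜] E).restrict hmaps = LinearMap.id :=
    LinearMap.ext fun x => Subtype.ext (hfix x x.2)
  have hcompact := hS.restrict hmaps A.isClosed_ker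
  rw [hid] at hcompact
  exact FiniteDimensional.of_isCompactOperator_id hcompact

theorem exists_seq_norm_eq_one_tendsto_zero {W : Submodule 𝕜 E}
    (h : ¬∃ c, ∀ w ∈ W, ‖w‖ ≤ c * ‖A w‖) :
    ∃ u : ℕ → E, (∀ n, u n ∈ W) ∧ (∀ n, ‖u n‖ = 1) ∧ Tendsto (fun n => A (u n)) atTop (𝓝 0) := by
  push Not at h
  choose w hwW hw using fun n : ℕ => h (n + 1)
  have hw0 : ∀ n, w n ≠ 0 := fun n h0 => by simpa [h0] using hw n
  refine ⟨fun n => (‖w n‖⁻¹ : 𝕜) • w n, fun n => W.smul_mem _ (hwW n),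
    fun n => norm_smul_inv_norm (hw0 n), squeeze_zero_norm (fun n => ?_)
    tendsto_one_div_add_atTop_nhds_zero_nat⟩
  have hpos : 0 < ‖w n‖ := norm_pos_iff.2 (hw0 n)
  rw [map_smul, norm_smul, norm_inv, RCLike.norm_ofReal, abs_norm, inv_mul_le_iff₀ hpos,
    mul_one_div, le_div_iff₀ (by positivity)]
  linarith [hw n]

theorem exists_norm_le_mul_norm_of_mul_eq_one_sub (hS : IsCompactOperator S) (hL : L * A = 1 - S)
    {W : Submodule 𝕜 E} (hW : IsClosed (W : Set E))
    (hWA : Disjoint W (LinearMap.ker (A : E →ₗ[𝕜] E))) :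
    ∃ c, ∀ w ∈ W, ‖w‖ ≤ c * ‖A w‖ := by
  by_contra h
  obtain ⟨u, huW, hu1, hAu⟩ := exists_seq_norm_eq_one_tendsto_zero h
  obtain ⟨z, φ, hφ, hz⟩ :=
    exists_subseq_tendsto_of_mul_eq_one_sub hS hL (fun n => (hu1 n).le) hAu
  have hzW : z ∈ W := hW.mem_of_tendsto hz (.of_forall fun n => huW _)
  have hAz : A z = 0 :=
    tendsto_nhds_unique ((A.continuous.tendsto z).comp hz) (hAu.comp hφ.tendsto_atTop)
  have hz1 : ‖z‖ = 1 :=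
    tendsto_nhds_unique ((continuous_norm.tendsto z).comp hz) (by simp [Function.comp_def, hu1])
  rw [Submodule.disjoint_def.1 hWA z hzW hAz, norm_zero] at hz1
  exact zero_ne_one hz1

theorem isClosed_range_of_mul_eq_one_sub [CompleteSpace E] (hS : IsCompactOperator S)
    (hL : L * A = 1 - S) : IsClosed (LinearMap.range (A : E →ₗ[𝕜] E) : Set E) := by
  have := finiteDimensional_ker_of_mul_eq_one_sub hS hL
  obtain ⟨W, hWc, hWA⟩ := (Submodule.ClosedComplemented.of_finiteDimensional
    (LinearMap.ker (A : E →ₗ[𝕜] E))).exists_isClosed_isCompl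
  obtain ⟨c, hc⟩ := exists_norm_le_mul_norm_of_mul_eq_one_sub hS hL hWc hWA.symm.disjoint
  have : CompleteSpace W := hWc.completeSpace_coe
  have hanti : AntilipschitzWith c.toNNReal (A ∘L W.subtypeL) :=
    ContinuousLinearMap.antilipschitz_of_bound _ fun w =>
      (hc w w.2).trans (mul_le_mul_of_nonneg_right (Real.le_coe_toNNReal c) (norm_nonneg _))
  have hrange : (LinearMap.range (A : E →ₗ[𝕜] E) : Set E) = Set.range (A ∘L W.subtypeL) := by
    rw [← Submodule.map_eq_range_iff.2 hWA.symm.codisjoint, Submodule.map_coe]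
    ext y
    simp
  rw [hrange]
  exact hanti.isClosed_range (A ∘L W.subtypeL).uniformContinuous

theorem finiteDimensional_quotient_range_of_mul_eq_one_sub {R T : E →L[𝕜] E}
    (hT : IsCompactOperator T) (hR : A * R = 1 - T)
    (hA : IsClosed (LinearMap.range (A : E →ₗ[𝕜] E) : Set E)) :
    FiniteDimensional 𝕜 (E ⧸ LinearMap.range (A : E →ₗ[𝕜] E)) := by
  -- the quotient is a normed (Hausdorff) space only because the range is closed
  have := hA
  have hmk : ∀ y : E, (LinearMap.range (A : E →ₗ[𝕜] E)).mkQ (T y) =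
      (LinearMap.range (A : E →ₗ[𝕜] E)).mkQ y := fun y => by
    have hARy : A (R y) = y - T y := by simpa using congr($hR y)
    rw [Submodule.mkQ_apply, Submodule.mkQ_apply, Submodule.Quotient.eq]
    exact ⟨-R y, by simp [hARy]⟩
  refine FiniteDimensional.of_isCompact_closedBall₀ 𝕜 one_pos
    (((hT.isCompact_closure_image_closedBall (f := (T : E →ₗ[𝕜] E)) 2).image
      (Submodule.continuous_mkQ _)).of_isClosed_subset isClosed_closedBall fun q hq => ?_)
  obtain ⟨y, rfl, hy⟩ := Submodule.Quotient.norm_mk_lt q one_pos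
  refine ⟨T y, subset_closure ⟨y, mem_closedBall_zero_iff.2 ?_, rfl⟩, hmk y⟩
  linarith [mem_closedBall_zero_iff.1 hq]

end CompactRegularizer

theorem isFredholmOp_of_mul_eq_one_sub {E : Type*} [NormedAddCommGroup E] [NormedSpace ℂ E]
    [CompleteSpace E] {A L R S T : E →L[ℂ] E} (hS : IsCompactOperator S)
    (hT : IsCompactOperator T) (hL : L * A = 1 - S) (hR : A * R = 1 - T) : IsFredholmOp A :=
  have hA := isClosed_range_of_mul_eq_one_sub hS hL
  ⟨finiteDimensional_ker_of_mul_eq_one_sub hS hL, hA,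
    finiteDimensional_quotient_range_of_mul_eq_one_sub hT hR hA⟩

theorem statement0_general {Y : Type*} [NormedAddCommGroup Y] [NormedSpace ℂ Y] [CompleteSpace Y]
    (P : ℕ → Y →L[ℂ] Y)
    (A C K B T₁ T₂ : Y →L[ℂ] Y)
    (hACK : A = C + K)
    (hCinv : ∃ Cinv : Y →L[ℂ] Y,
      C.comp Cinv = ContinuousLinearMap.id ℂ Y ∧
      Cinv.comp C = ContinuousLinearMap.id ℂ Y ∧ MemS P Cinv)
    (hKM : MemM P K)
    (hT₁ : MemSN P T₁) (hT₂ : MemSN P T₂)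
    (hAB : A.comp B = ContinuousLinearMap.id ℂ Y + T₁)
    (hBA : B.comp A = ContinuousLinearMap.id ℂ Y + T₂) :
    IsFredholmOp A := by
  obtain ⟨Cinv, hCCinv, hCinvC, hCinvS⟩ := hCinv
  simp only [← ContinuousLinearMap.one_def, ← ContinuousLinearMap.mul_def]
    at hCCinv hCinvC hAB hBA
  refine isFredholmOp_of_mul_eq_one_sub (L := B - T₂ * Cinv) (R := Cinv - B * K * Cinv)
    (T := T₁ * K * Cinv)
    (hT₂.isCompactOperator_comp (hCinvS.comp_memM hKM))
    ((hT₁.isCompactOperator_comp hKM).comp_clm Cinv) ?_ ?_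
  · calc (B - T₂ * Cinv) * A = B * A - T₂ * (Cinv * (C + K)) := by rw [hACK]; noncomm_ring
      _ = 1 - T₂ * (Cinv * K) := by rw [hBA, mul_add, hCinvC]; noncomm_ring
  · calc A * (Cinv - B * K * Cinv) = (C + K) * Cinv - A * B * K * Cinv := by
          rw [← hACK]; noncomm_ring
      _ = 1 - T₁ * K * Cinv := by rw [hAB, add_mul, hCCinv]; noncomm_ring

/-- If `A = C + K` with `C` bijective, `C⁻¹ ∈ S(Y)`,
`K ∈ S(Y) ∩ M(Y)`, and `A B = I + T₁`, `B A = I + T₂` with `T₁, T₂ ∈ SN(Y)`,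
then `A` is Fredholm. -/
theorem statement0 {Y : Type*} [NormedAddCommGroup Y] [NormedSpace ℂ Y] [CompleteSpace Y]
    (P : ℕ → Y →L[ℂ] Y) (hP : ApproxId P)
    (A C K B T₁ T₂ : Y →L[ℂ] Y)
    (hACK : A = C + K)
    (hCbij : Function.Bijective C)
    (hCinv : ∃ Cinv : Y →L[ℂ] Y,
      C.comp Cinv = ContinuousLinearMap.id ℂ Y ∧
      Cinv.comp C = ContinuousLinearMap.id ℂ Y ∧ MemS P Cinv)
    (hKS : MemS P K) (hKM : MemM P K)
    (hT₁ : MemSN P T₁) (hT₂ : MemSN P T₂)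
    (hAB : A.comp B = ContinuousLinearMap.id ℂ Y + T₁)
    (hBA : B.comp A = ContinuousLinearMap.id ℂ Y + T₂) :
    IsFredholmOp A :=
  statement0_general P A C K B T₁ T₂ hACK hCinv hKM hT₁ hT₂ hAB hBA
end

section
/- An operator A ∈ L(Y) belongs to SN(Y), i.e. x_j →s x implies ‖A x_j − A x‖ → 0, if and only if ‖A Q_n‖ → 0 as n → ∞. -/
open Filter Topology

/-!
Splitting `y = Pₙ y + Qₙ y` gives `‖A y‖ ≤ ‖A‖ ‖Pₙ y‖ + ‖A Qₙ‖ ‖y‖`; for `y = xⱼ - x₀` with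
`xⱼ →s x₀` the first term vanishes as `j → ∞` for each fixed `n`, and the second is small for large
`n`. Conversely, choose vectors `xₙ` of norm `< 1` with `‖A Qₙ xₙ‖ > ‖A Qₙ‖ - 1 / (n + 1)`. Since
`Pₘ Pₙ = Pₘ` for large `n`, `Pₘ Qₙ = 0` eventually, so `Qₙ xₙ →s 0`; hence `‖A Qₙ xₙ‖ → 0`, and
with it `‖A Qₙ‖ → 0`.
-/

theorem tendsto_zero_of_le_add_of_tendsto {α ι : Type*} {l : Filter α} {L : Filter ι} [L.NeBot]
    {f : α → ℝ} {g : ι → α → ℝ} {c : ι → ℝ} (hf : ∀ j, 0 ≤ f j)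
    (hle : ∀ n j, f j ≤ g n j + c n) (hg : ∀ n, Tendsto (g n) l (𝓝 0))
    (hc : Tendsto c L (𝓝 0)) : Tendsto f l (𝓝 0) := by
  rw [Metric.tendsto_nhds]
  intro ε hε
  obtain ⟨n, hn⟩ := (hc.eventually (gt_mem_nhds (half_pos hε))).exists
  filter_upwards [(hg n).eventually (gt_mem_nhds (half_pos hε))] with j hj
  rw [Real.dist_0_eq_abs, abs_of_nonneg (hf j)]
  linarith [hle n j]

section Qop

variable {Y : Type*} [NormedAddCommGroup Y] [NormedSpace ℂ Y] {P : ℕ → Y →L[ℂ] Y}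

theorem Qop_apply (n : ℕ) (x : Y) : Qop P n x = x - P n x := rfl

theorem apply_add_Qop_apply (n : ℕ) (x : Y) : P n x + Qop P n x = x := by
  rw [Qop_apply, add_sub_cancel]

theorem norm_apply_le_add_norm_comp_Qop (A : Y →L[ℂ] Y) (n : ℕ) (x : Y) :
    ‖A x‖ ≤ ‖A‖ * ‖P n x‖ + ‖A.comp (Qop P n)‖ * ‖x‖ :=
  calc ‖A x‖ = ‖A (P n x) + A.comp (Qop P n) x‖ := by
        rw [ContinuousLinearMap.comp_apply, ← map_add, apply_add_Qop_apply]
    _ ≤ ‖A (P n x)‖ + ‖A.comp (Qop P n) x‖ := norm_add_le _ _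
    _ ≤ ‖A‖ * ‖P n x‖ + ‖A.comp (Qop P n)‖ * ‖x‖ :=
        add_le_add (A.le_opNorm _) (ContinuousLinearMap.le_opNorm _ _)

theorem memSN_of_tendsto_norm_comp_Qop {A : Y →L[ℂ] Y}
    (hA : Tendsto (fun n => ‖A.comp (Qop P n)‖) atTop (𝓝 0)) : MemSN P A := by
  rintro x x₀ ⟨⟨C, hC⟩, hconv⟩
  have hbound : ∀ j, ‖x j - x₀‖ ≤ C + ‖x₀‖ := fun j =>
    (norm_sub_le _ _).trans (add_le_add_left (hC j) _)
  refine tendsto_zero_of_le_add_of_tendsto (g := fun n j => ‖A‖ * ‖P n (x j - x₀)‖)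
    (fun _ => norm_nonneg _) (fun n j => ?_)
    (fun n => by simpa only [mul_zero] using (hconv n).const_mul ‖A‖)
    (by simpa only [zero_mul] using hA.mul_const (C + ‖x₀‖))
  rw [← map_sub]
  grw [norm_apply_le_add_norm_comp_Qop A n, hbound j]

namespace ApproxId

variable (hP : ApproxId P)
include hP

theorem norm_apply_le (n : ℕ) (x : Y) : ‖P n x‖ ≤ ‖x‖ :=
  (hP.1 x).1 ⟨n, rfl⟩

theorem norm_Qop_apply_le (n : ℕ) (x : Y) : ‖Qop P n x‖ ≤ 2 * ‖x‖ := by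
  rw [Qop_apply, two_mul]
  grw [norm_sub_le, hP.norm_apply_le n x]

theorem eventually_apply_Qop_apply_eq_zero (m : ℕ) :
    ∀ᶠ n in atTop, ∀ x : Y, P m (Qop P n x) = 0 := by
  obtain ⟨N, -, hN⟩ := hP.2 m
  filter_upwards [eventually_ge_atTop N] with n hn x
  rw [Qop_apply, map_sub, ← ContinuousLinearMap.comp_apply, (hN n hn).2, sub_self]

theorem sConv_Qop_apply {x : ℕ → Y} {C : ℝ} (hx : ∀ n, ‖x n‖ ≤ C) :
    SConv P (fun n => Qop P n (x n)) 0 := by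
  refine ⟨⟨2 * C, fun n => (hP.norm_Qop_apply_le n (x n)).trans (by linarith [hx n])⟩,
    fun m => tendsto_const_nhds.congr' ?_⟩
  filter_upwards [hP.eventually_apply_Qop_apply_eq_zero m] with n hn
  rw [sub_zero, hn, norm_zero]

theorem tendsto_norm_comp_Qop_of_memSN {A : Y →L[ℂ] Y} (hA : MemSN P A) :
    Tendsto (fun n => ‖A.comp (Qop P n)‖) atTop (𝓝 0) := by
  choose x hx_norm hx_lt using fun n : ℕ => (A.comp (Qop P n)).exists_lt_apply_of_lt_opNorm
    (sub_lt_self _ (Nat.one_div_pos_of_nat (n := n)))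
  have hAx : Tendsto (fun n => ‖A (Qop P n (x n))‖) atTop (𝓝 0) := by
    simpa using hA _ 0 (hP.sConv_Qop_apply fun n => (hx_norm n).le)
  have hsum := hAx.add (tendsto_one_div_add_atTop_nhds_zero_nat (𝕜 := ℝ))
  rw [add_zero] at hsum
  exact squeeze_zero (fun _ => norm_nonneg _)
    (fun n => (sub_lt_iff_lt_add.mp (hx_lt n)).le) hsum

end ApproxId

end Qop

theorem statement12_general {Y : Type*} [NormedAddCommGroup Y] [NormedSpace ℂ Y]
    (P : ℕ → Y →L[ℂ] Y) (hP : ApproxId P) (A : Y →L[ℂ] Y) :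
    MemSN P A ↔ Tendsto (fun n => ‖A.comp (Qop P n)‖) atTop (𝓝 0) :=
  ⟨hP.tendsto_norm_comp_Qop_of_memSN, memSN_of_tendsto_norm_comp_Qop⟩

/-- `A ∈ SN(Y)` iff `‖A Qₙ‖ → 0`. -/
theorem statement12 {Y : Type*} [NormedAddCommGroup Y] [NormedSpace ℂ Y] [CompleteSpace Y]
    (P : ℕ → Y →L[ℂ] Y) (hP : ApproxId P) (A : Y →L[ℂ] Y) :
    MemSN P A ↔ Tendsto (fun n => ‖A.comp (Qop P n)‖) atTop (𝓝 0) :=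
  statement12_general P hP A
end

section
/- An operator A ∈ L(Y) belongs to S(Y), i.e. x_j →s x implies A x_j →s A x, if and only if, for every m ∈ ℕ, ‖P_m A Q_n‖ → 0 as n → ∞. -/
open Filter Topology

/-! For `A ∈ S(Y)`, pick `‖xₙ‖ < 1` with `‖Pₘ A Qₙ xₙ‖ > ‖Pₘ A Qₙ‖ - 1/(n+1)`. Since `Pₖ Qₙ = 0`
for `n ≥ N(k)`, the bounded sequence `Qₙ xₙ` converges strictly to `0`, hence so does `A Qₙ xₙ`,
which forces `‖Pₘ A Qₙ‖ → 0`. Conversely, splitting `Pₘ A = (Pₘ A) Pₙ + Pₘ A Qₙ` bounds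
`‖Pₘ A (xⱼ - x)‖` by `‖Pₘ A‖ ‖Pₙ (xⱼ - x)‖ + ‖Pₘ A Qₙ‖ sup ‖xⱼ - x‖`; let `j → ∞`, then `n → ∞`. -/

lemma tendsto_zero_of_forall_le_add {α β : Type*} {l : Filter α} {l' : Filter β} [l'.NeBot]
    {a : α → ℝ} {b : β → α → ℝ} {c : β → ℝ} (ha : ∀ j, 0 ≤ a j)
    (hb : ∀ n, Tendsto (b n) l (𝓝 0)) (hc : Tendsto c l' (𝓝 0))
    (hle : ∀ n j, a j ≤ b n j + c n) : Tendsto a l (𝓝 0) := by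
  refine tendsto_order.2 ⟨fun ε hε => .of_forall fun j => hε.trans_le (ha j), fun ε hε => ?_⟩
  obtain ⟨n, hn⟩ := (hc.eventually (gt_mem_nhds (half_pos hε))).exists
  filter_upwards [(hb n).eventually (gt_mem_nhds (half_pos hε))] with j hj
  linarith [hle n j]

lemma ContinuousLinearMap.apply_add_apply_Qop {Y : Type*} [NormedAddCommGroup Y]
    [NormedSpace ℂ Y] (P : ℕ → Y →L[ℂ] Y) (B : Y →L[ℂ] Y) (n : ℕ) (y : Y) :
    B (P n y) + B (Qop P n y) = B y := by
  simp [Qop]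

section ApproxId

variable {Y : Type*} [NormedAddCommGroup Y] [NormedSpace ℂ Y] {P : ℕ → Y →L[ℂ] Y}

lemma SConv.exists_norm_sub_le {x : ℕ → Y} {x₀ : Y} (hx : SConv P x x₀) :
    ∃ D, ∀ j, ‖x j - x₀‖ ≤ D := by
  obtain ⟨C, hC⟩ := hx.1
  exact ⟨C + ‖x₀‖, fun j => (norm_sub_le _ _).trans (by linarith [hC j])⟩

lemma memS_of_tendsto_norm_comp_comp_Qop {A : Y →L[ℂ] Y}
    (h : ∀ m, Tendsto (fun n => ‖(P m).comp (A.comp (Qop P n))‖) atTop (𝓝 0)) : MemS P A := by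
  intro x x₀ hx
  obtain ⟨C, hC⟩ := hx.1
  obtain ⟨D, hD⟩ := hx.exists_norm_sub_le
  refine ⟨⟨‖A‖ * C, fun j => A.le_opNorm_of_le (hC j)⟩, fun m => ?_⟩
  refine tendsto_zero_of_forall_le_add (fun _ => norm_nonneg _)
    (fun n => by simpa only [mul_zero] using (hx.2 n).const_mul ‖(P m).comp A‖)
    (by simpa only [zero_mul] using (h m).mul_const D) fun n j => ?_
  set T := (P m).comp (A.comp (Qop P n))
  calc ‖P m (A (x j) - A x₀)‖
      = ‖(P m).comp A (P n (x j - x₀)) + T (x j - x₀)‖ := by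
        rw [← map_sub]
        exact congrArg norm (((P m).comp A).apply_add_apply_Qop P n _).symm
    _ ≤ ‖(P m).comp A‖ * ‖P n (x j - x₀)‖ + ‖T‖ * D :=
        (norm_add_le _ _).trans (add_le_add (ContinuousLinearMap.le_opNorm _ _)
          (T.le_opNorm_of_le (hD j)))

lemma ApproxId.norm_apply_le_s13 (hP : ApproxId P) (n : ℕ) (x : Y) : ‖P n x‖ ≤ ‖x‖ :=
  (hP.1 x).1 ⟨n, rfl⟩

lemma ApproxId.norm_Qop_apply_le_s13 (hP : ApproxId P) (n : ℕ) (x : Y) : ‖Qop P n x‖ ≤ 2 * ‖x‖ :=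
  calc ‖x - P n x‖ ≤ ‖x‖ + ‖P n x‖ := norm_sub_le _ _
    _ ≤ 2 * ‖x‖ := by linarith [hP.norm_apply_le_s13 n x]

lemma ApproxId.eventually_apply_Qop_eq_zero (hP : ApproxId P) (m : ℕ) :
    ∀ᶠ n in atTop, ∀ y, P m (Qop P n y) = 0 := by
  obtain ⟨N, -, hN⟩ := hP.2 m
  filter_upwards [eventually_ge_atTop N] with n hn y
  simp [Qop, ← ContinuousLinearMap.comp_apply, (hN n hn).2]

lemma ApproxId.sConv_Qop_apply_s13 (hP : ApproxId P) {x : ℕ → Y} {C : ℝ} (hx : ∀ n, ‖x n‖ ≤ C) :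
    SConv P (fun n => Qop P n (x n)) 0 := by
  refine ⟨⟨2 * C, fun n => (hP.norm_Qop_apply_le_s13 n (x n)).trans (by linarith [hx n])⟩,
    fun m => tendsto_const_nhds.congr' ?_⟩
  filter_upwards [hP.eventually_apply_Qop_eq_zero m] with n hn
  rw [sub_zero, hn, norm_zero]

lemma MemS.tendsto_norm_comp_comp_Qop (hP : ApproxId P) {A : Y →L[ℂ] Y} (hA : MemS P A)
    (m : ℕ) : Tendsto (fun n => ‖(P m).comp (A.comp (Qop P n))‖) atTop (𝓝 0) := by
  set T := fun n => (P m).comp (A.comp (Qop P n))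
  choose x hx_norm hx_lt using fun n =>
    (T n).exists_lt_apply_of_lt_opNorm (sub_lt_self ‖T n‖ (Nat.one_div_pos_of_nat (n := n)))
  have hTx : Tendsto (fun n => ‖T n (x n)‖) atTop (𝓝 0) := by
    simpa [T] using (hA _ 0 (hP.sConv_Qop_apply_s13 fun n => (hx_norm n).le)).2 m
  refine squeeze_zero (fun n => norm_nonneg _) (fun n => (sub_lt_iff_lt_add.1 (hx_lt n)).le) ?_
  simpa using hTx.add tendsto_one_div_add_atTop_nhds_zero_nat

end ApproxId

theorem statement13_general {Y : Type*} [NormedAddCommGroup Y] [NormedSpace ℂ Y]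
    (P : ℕ → Y →L[ℂ] Y) (hP : ApproxId P) (A : Y →L[ℂ] Y) :
    MemS P A ↔ ∀ m : ℕ,
      Tendsto (fun n => ‖(P m).comp (A.comp (Qop P n))‖) atTop (𝓝 0) :=
  ⟨fun hA => hA.tendsto_norm_comp_comp_Qop hP, memS_of_tendsto_norm_comp_comp_Qop⟩

/-- `A ∈ S(Y)` iff for every `m`, `‖Pₘ A Qₙ‖ → 0` as `n → ∞`. -/
theorem statement13 {Y : Type*} [NormedAddCommGroup Y] [NormedSpace ℂ Y] [CompleteSpace Y]
    (P : ℕ → Y →L[ℂ] Y) (hP : ApproxId P) (A : Y →L[ℂ] Y) :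
    MemS P A ↔ ∀ m : ℕ,
      Tendsto (fun n => ‖(P m).comp (A.comp (Qop P n))‖) atTop (𝓝 0) :=
  statement13_general P hP A
end

section
/- An operator A ∈ L(Y) belongs to L(Y,P) if and only if, for every m ∈ ℕ, both ‖P_m A Q_n‖ → 0 and ‖Q_n A P_m‖ → 0 as n → ∞. -/
open Filter Topology

/-!
Since `Pₘ ∈ K(Y,P)` by (ii), membership in `L(Y,P)` forces `‖Pₘ A Qₙ‖ → 0` and `‖Qₙ A Pₘ‖ → 0`.
Conversely, for `K ∈ K(Y,P)` split `K = Pₘ K + Qₘ K`: then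
`‖Qₙ A K‖ ≤ ‖Qₙ A Pₘ‖ ‖K‖ + 2 ‖A‖ ‖Qₘ K‖`, where the first term tends to `0` in `n` for fixed `m`
and the second is small once `m` is large (using `‖Qₙ‖ ≤ 2`, from (i)); symmetrically for `K A Qₙ`.
-/

lemma tendsto_zero_of_le_add {α ι : Type*} {l : Filter α} {l' : Filter ι} [l'.NeBot]
    {f : α → ℝ} {g : ι → α → ℝ} {c : ι → ℝ} (hf : ∀ a, 0 ≤ f a)
    (hg : ∀ i, Tendsto (g i) l (𝓝 0)) (hc : Tendsto c l' (𝓝 0))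
    (hle : ∀ i a, f a ≤ g i a + c i) : Tendsto f l (𝓝 0) := by
  rw [Metric.tendsto_nhds]
  intro ε hε
  obtain ⟨i, hi⟩ := ((Metric.tendsto_nhds.1 hc) (ε / 2) (half_pos hε)).exists
  filter_upwards [(Metric.tendsto_nhds.1 (hg i)) (ε / 2) (half_pos hε)] with a ha
  rw [Real.dist_0_eq_abs] at ha hi ⊢
  rw [abs_of_nonneg (hf a)]
  linarith [le_abs_self (g i a), le_abs_self (c i), hle i a]

namespace ApproxId

variable {Y : Type*} [NormedAddCommGroup Y] [NormedSpace ℂ Y] {P : ℕ → Y →L[ℂ] Y}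

lemma opNorm_le_one (hP : ApproxId P) (n : ℕ) : ‖P n‖ ≤ 1 :=
  ContinuousLinearMap.opNorm_le_bound _ zero_le_one fun x => by
    simpa using (hP.1 x).1 ⟨n, rfl⟩

lemma opNorm_Qop_le_two (hP : ApproxId P) (n : ℕ) : ‖Qop P n‖ ≤ 2 :=
  calc ‖Qop P n‖ ≤ ‖ContinuousLinearMap.id ℂ Y‖ + ‖P n‖ := norm_sub_le _ _
    _ ≤ 1 + 1 := add_le_add ContinuousLinearMap.norm_id_le (hP.opNorm_le_one n)
    _ = 2 := by norm_num

lemma memKP (hP : ApproxId P) (m : ℕ) : MemKP P (P m) := by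
  obtain ⟨N, -, hN⟩ := hP.2 m
  have hQ : ∀ n ≥ N, (P m).comp (Qop P n) = 0 ∧ (Qop P n).comp (P m) = 0 := fun n hn => by
    simp only [Qop, ContinuousLinearMap.comp_sub, ContinuousLinearMap.sub_comp,
      ContinuousLinearMap.comp_id, ContinuousLinearMap.id_comp, (hN n hn).1, (hN n hn).2,
      sub_self, and_self]
  constructor <;> refine tendsto_const_nhds.congr' ?_ <;>
    filter_upwards [eventually_ge_atTop N] with n hn <;> simp [hQ n hn]

lemma add_Qop (m : ℕ) : P m + Qop P m = ContinuousLinearMap.id ℂ Y :=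
  add_sub_cancel _ _

lemma opNorm_Qop_comp_comp_le (hP : ApproxId P) (A K : Y →L[ℂ] Y) (m n : ℕ) :
    ‖(Qop P n).comp (A.comp K)‖ ≤
      ‖(Qop P n).comp (A.comp (P m))‖ * ‖K‖ + 2 * ‖A‖ * ‖(Qop P m).comp K‖ := by
  have hsplit : (Qop P n).comp (A.comp K) =
      ((Qop P n).comp (A.comp (P m))).comp K + ((Qop P n).comp A).comp ((Qop P m).comp K) := by
    conv_lhs => rw [← K.id_comp, ← add_Qop (P := P) m]
    simp only [ContinuousLinearMap.add_comp, ContinuousLinearMap.comp_add,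
      ContinuousLinearMap.comp_assoc]
  calc ‖(Qop P n).comp (A.comp K)‖
      ≤ ‖(Qop P n).comp (A.comp (P m))‖ * ‖K‖
          + ‖(Qop P n).comp A‖ * ‖(Qop P m).comp K‖ := by
        rw [hsplit]
        exact (norm_add_le _ _).trans (add_le_add (ContinuousLinearMap.opNorm_comp_le _ _)
          (ContinuousLinearMap.opNorm_comp_le _ _))
    _ ≤ ‖(Qop P n).comp (A.comp (P m))‖ * ‖K‖ + 2 * ‖A‖ * ‖(Qop P m).comp K‖ := by
        gcongr
        exact (ContinuousLinearMap.opNorm_comp_le _ _).trans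
          (mul_le_mul_of_nonneg_right (hP.opNorm_Qop_le_two n) (norm_nonneg A))

lemma opNorm_comp_comp_Qop_le (hP : ApproxId P) (A K : Y →L[ℂ] Y) (m n : ℕ) :
    ‖(K.comp A).comp (Qop P n)‖ ≤
      ‖K‖ * ‖(P m).comp (A.comp (Qop P n))‖ + ‖K.comp (Qop P m)‖ * (2 * ‖A‖) := by
  have hsplit : (K.comp A).comp (Qop P n) =
      K.comp ((P m).comp (A.comp (Qop P n)))
        + (K.comp (Qop P m)).comp (A.comp (Qop P n)) := by
    conv_lhs => rw [← K.comp_id, ← add_Qop (P := P) m]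
    simp only [ContinuousLinearMap.add_comp, ContinuousLinearMap.comp_add,
      ContinuousLinearMap.comp_assoc]
  calc ‖(K.comp A).comp (Qop P n)‖
      ≤ ‖K‖ * ‖(P m).comp (A.comp (Qop P n))‖
          + ‖K.comp (Qop P m)‖ * ‖A.comp (Qop P n)‖ := by
        rw [hsplit]
        exact (norm_add_le _ _).trans (add_le_add (ContinuousLinearMap.opNorm_comp_le _ _)
          (ContinuousLinearMap.opNorm_comp_le _ _))
    _ ≤ ‖K‖ * ‖(P m).comp (A.comp (Qop P n))‖ + ‖K.comp (Qop P m)‖ * (2 * ‖A‖) := by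
        gcongr
        exact (ContinuousLinearMap.opNorm_comp_le _ _).trans
          (by nlinarith [hP.opNorm_Qop_le_two n, norm_nonneg A])

lemma memKP_comp_left (hP : ApproxId P) {A K : Y →L[ℂ] Y}
    (hA : ∀ m, Tendsto (fun n => ‖(Qop P n).comp (A.comp (P m))‖) atTop (𝓝 0))
    (hK : MemKP P K) : MemKP P (A.comp K) := by
  refine ⟨squeeze_zero (fun _ => norm_nonneg _) (fun n => ?_)
      (by simpa using hK.1.const_mul ‖A‖),
    tendsto_zero_of_le_add (fun _ => norm_nonneg _)
      (fun m => by simpa using (hA m).mul_const ‖K‖)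
      (by simpa using hK.2.const_mul (2 * ‖A‖)) (hP.opNorm_Qop_comp_comp_le A K)⟩
  rw [ContinuousLinearMap.comp_assoc]
  exact ContinuousLinearMap.opNorm_comp_le _ _

lemma memKP_comp_right (hP : ApproxId P) {A K : Y →L[ℂ] Y}
    (hA : ∀ m, Tendsto (fun n => ‖(P m).comp (A.comp (Qop P n))‖) atTop (𝓝 0))
    (hK : MemKP P K) : MemKP P (K.comp A) := by
  refine ⟨tendsto_zero_of_le_add (fun _ => norm_nonneg _)
      (fun m => by simpa using (hA m).const_mul ‖K‖)
      (by simpa using hK.1.mul_const (2 * ‖A‖)) (hP.opNorm_comp_comp_Qop_le A K),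
    squeeze_zero (fun _ => norm_nonneg _) (fun n => ?_) (by simpa using hK.2.mul_const ‖A‖)⟩
  rw [← ContinuousLinearMap.comp_assoc]
  exact ContinuousLinearMap.opNorm_comp_le _ _

end ApproxId

theorem statement14_general {Y : Type*} [NormedAddCommGroup Y] [NormedSpace ℂ Y]
    (P : ℕ → Y →L[ℂ] Y) (hP : ApproxId P) (A : Y →L[ℂ] Y) :
    MemLP P A ↔ ∀ m : ℕ,
      Tendsto (fun n => ‖(P m).comp (A.comp (Qop P n))‖) atTop (𝓝 0) ∧
      Tendsto (fun n => ‖(Qop P n).comp (A.comp (P m))‖) atTop (𝓝 0) := by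
  refine ⟨fun hA m => ?_, fun h K hK =>
    ⟨hP.memKP_comp_left (fun m => (h m).2) hK, hP.memKP_comp_right (fun m => (h m).1) hK⟩⟩
  obtain ⟨hAP, hPA⟩ := hA (P m) (hP.memKP m)
  exact ⟨by simpa only [ContinuousLinearMap.comp_assoc] using hPA.1, hAP.2⟩

/-- `A ∈ L(Y,P)` iff for every `m`, both `‖Pₘ A Qₙ‖ → 0` and
`‖Qₙ A Pₘ‖ → 0` as `n → ∞`. -/
theorem statement14 {Y : Type*} [NormedAddCommGroup Y] [NormedSpace ℂ Y] [CompleteSpace Y]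
    (P : ℕ → Y →L[ℂ] Y) (hP : ApproxId P) (A : Y →L[ℂ] Y) :
    MemLP P A ↔ ∀ m : ℕ,
      Tendsto (fun n => ‖(P m).comp (A.comp (Qop P n))‖) atTop (𝓝 0) ∧
      Tendsto (fun n => ‖(Qop P n).comp (A.comp (P m))‖) atTop (𝓝 0) :=
  statement14_general P hP A
end

section
/- Let (A_n) be a sequence in L(Y) and A ∈ L(Y). Then A_n P-converges to A, i.e. ‖(A_n − A) K‖ → 0 and ‖K (A_n − A)‖ → 0 as n → ∞ for every K ∈ K(Y,P), if and only if sup_n ‖A_n‖ < ∞ and, for every m ∈ ℕ, ‖(A_n − A) P_m‖ → 0 and ‖P_m (A_n − A)‖ → 0 as n → ∞. -/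
open Filter Topology

/-!
For `⇐`, split `K = Pₘ K + Qₘ K`: the first part is killed by `‖(Aₙ - A) Pₘ‖ → 0`, the
second is small uniformly in `n` because `(Aₙ)` is bounded and `‖Qₘ K‖ → 0`; symmetrically on
the other side. For `⇒`, each `Pₘ` lies in `K(Y,P)`, which gives the second condition. Since the
`Pₘ` are uniformly bounded, `K(Y,P)` is closed in `L(Y)`, hence a Banach space, and the
uniform boundedness principle applied to `K ↦ K (Aₙ - A)` bounds `‖Pₘ (Aₙ - A)‖` uniformly in
`m` and `n`; as `‖B‖ = supₘ ‖Pₘ B‖`, the sequence `(Aₙ)` is bounded.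
-/

lemma tendsto_zero_of_forall_le_add_s16 {ι κ : Type*} {l : Filter ι} {l' : Filter κ} [l'.NeBot]
    {f : ι → ℝ} {g : κ → ι → ℝ} {c : κ → ℝ} (hf : ∀ i, 0 ≤ f i)
    (hg : ∀ k, Tendsto (g k) l (𝓝 0)) (hc : Tendsto c l' (𝓝 0))
    (hle : ∀ k i, f i ≤ g k i + c k) : Tendsto f l (𝓝 0) := by
  refine Metric.tendsto_nhds.2 fun ε hε => ?_
  obtain ⟨k, hk⟩ := (hc.eventually (gt_mem_nhds (half_pos hε))).exists
  filter_upwards [(hg k).eventually (gt_mem_nhds (half_pos hε))] with i hi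
  rw [Real.dist_0_eq_abs, abs_of_nonneg (hf i)]
  linarith [hle k i]

namespace ContinuousLinearMap

variable {Y : Type*} [NormedAddCommGroup Y] [NormedSpace ℂ Y] {P : ℕ → Y →L[ℂ] Y}

lemma norm_le_one_of_isLUB (hP : ∀ x : Y, IsLUB (Set.range fun n => ‖P n x‖) ‖x‖) (m : ℕ) :
    ‖P m‖ ≤ 1 :=
  opNorm_le_bound _ zero_le_one fun x => by simpa using (hP x).1 ⟨m, rfl⟩

lemma opNorm_le_of_forall_norm_comp_le {X : Type*} [SeminormedAddCommGroup X]
    [NormedSpace ℂ X] (hP : ∀ y : Y, IsLUB (Set.range fun n => ‖P n y‖) ‖y‖) {T : X →L[ℂ] Y}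
    {C : ℝ} (hC : 0 ≤ C) (hT : ∀ m, ‖(P m).comp T‖ ≤ C) : ‖T‖ ≤ C :=
  opNorm_le_bound _ hC fun x => (hP (T x)).2 <| by
    rintro _ ⟨m, rfl⟩
    exact ((P m).comp T).le_of_opNorm_le (hT m) x

end ContinuousLinearMap

open ContinuousLinearMap

section KP

variable {Y : Type*} [NormedAddCommGroup Y] [NormedSpace ℂ Y] {P : ℕ → Y →L[ℂ] Y}
  {K : Y →L[ℂ] Y}

lemma norm_Qop_le (hP : ∀ x : Y, IsLUB (Set.range fun n => ‖P n x‖) ‖x‖) (n : ℕ) :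
    ‖Qop P n‖ ≤ 2 :=
  calc ‖Qop P n‖ ≤ ‖ContinuousLinearMap.id ℂ Y‖ + ‖P n‖ := norm_sub_le _ _
    _ ≤ 1 + 1 := add_le_add norm_id_le (norm_le_one_of_isLUB hP n)
    _ = 2 := one_add_one_eq_two

lemma add_Qop (n : ℕ) : P n + Qop P n = ContinuousLinearMap.id ℂ Y :=
  add_sub_cancel _ _

lemma memKP_iff : MemKP P K ↔ Tendsto (fun n => K.comp (Qop P n)) atTop (𝓝 0) ∧
    Tendsto (fun n => (Qop P n).comp K) atTop (𝓝 0) :=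
  and_congr tendsto_zero_iff_norm_tendsto_zero.symm tendsto_zero_iff_norm_tendsto_zero.symm

lemma memKP_of_eventually (h : ∀ᶠ n in atTop, K.comp (P n) = K ∧ (P n).comp K = K) :
    MemKP P K := by
  refine memKP_iff.2 ⟨tendsto_const_nhds.congr' ?_, tendsto_const_nhds.congr' ?_⟩ <;>
    filter_upwards [h] with n hn <;> simp [Qop, hn.1, hn.2]

lemma ApproxId.memKP_s16 (hP : ApproxId P) (m : ℕ) : MemKP P (P m) := by
  obtain ⟨N, -, hN⟩ := hP.2 m
  exact memKP_of_eventually <| eventually_atTop.2 ⟨N, fun n hn => (hN n hn).symm⟩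

variable (P) in
/-- The module structure is the one of the normed space `L(Y)`: with the default one, found
through `ContinuousLinearMap.module`, the operator norm on `submoduleKP P →L[ℂ] _` is not found. -/
def submoduleKP : @Submodule ℂ (Y →L[ℂ] Y) _ _ NormedSpace.toModule where
  carrier := {K | MemKP P K}
  zero_mem' := memKP_of_eventually (by simp)
  add_mem' {K L} hK hL := by
    rw [Set.mem_ofPred_eq, memKP_iff] at *
    simpa only [add_comp, comp_add, add_zero] using And.intro (hK.1.add hL.1) (hK.2.add hL.2)
  smul_mem' c K hK := by
    rw [Set.mem_ofPred_eq, memKP_iff] at *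
    simpa only [smul_comp, comp_smul, smul_zero] using
      And.intro (hK.1.const_smul c) (hK.2.const_smul c)

lemma isClosed_setOf_memKP (hP : ∀ x : Y, IsLUB (Set.range fun n => ‖P n x‖) ‖x‖) :
    IsClosed {K : Y →L[ℂ] Y | MemKP P K} := by
  have lipschitz_comp (n : ℕ) : LipschitzWith 2 fun K : Y →L[ℂ] Y => K.comp (Qop P n) :=
    LipschitzWith.of_dist_le_mul fun K L => by
      rw [dist_eq_norm, dist_eq_norm, ← sub_comp, mul_comm]
      exact (opNorm_comp_le _ _).trans (by gcongr; exact norm_Qop_le hP n)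
  have lipschitz_comp' (n : ℕ) : LipschitzWith 2 fun K : Y →L[ℂ] Y => (Qop P n).comp K :=
    LipschitzWith.of_dist_le_mul fun K L => by
      rw [dist_eq_norm, dist_eq_norm, ← comp_sub]
      exact (opNorm_comp_le _ _).trans (by gcongr; exact norm_Qop_le hP n)
  simp only [memKP_iff, Set.ofPred_and]
  exact ((LipschitzWith.uniformEquicontinuous _ _ lipschitz_comp).equicontinuous
    |>.isClosed_setOfPred_tendsto continuous_const).inter
    ((LipschitzWith.uniformEquicontinuous _ _ lipschitz_comp').equicontinuous
    |>.isClosed_setOfPred_tendsto continuous_const)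

lemma ApproxId.exists_norm_le_of_bounded_comp [CompleteSpace Y] (hP : ApproxId P)
    {B : ℕ → Y →L[ℂ] Y} (hB : ∀ K, MemKP P K → ∃ C, ∀ n, ‖K.comp (B n)‖ ≤ C) :
    ∃ C, ∀ n, ‖B n‖ ≤ C := by
  have : CompleteSpace (submoduleKP P) :=
    IsClosed.completeSpace_coe (hs := isClosed_setOf_memKP hP.1)
  let T (n : ℕ) : submoduleKP P →L[ℂ] Y →L[ℂ] Y :=
    ((compL ℂ Y Y Y).flip (B n)).comp (submoduleKP P).subtypeL
  have hT (n : ℕ) (K : submoduleKP P) : T n K = (K : Y →L[ℂ] Y).comp (B n) := rfl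
  obtain ⟨C, hC⟩ : ∃ C, ∀ n, ‖T n‖ ≤ C := banach_steinhaus fun K : submoduleKP P => by
    simpa only [hT] using hB K K.property
  refine ⟨max C 0, fun n => opNorm_le_of_forall_norm_comp_le hP.1 (le_max_right _ _) fun m => ?_⟩
  calc ‖(P m).comp (B n)‖ ≤ C * ‖P m‖ :=
        (T n).le_of_opNorm_le (hC n) (⟨P m, hP.memKP_s16 m⟩ : submoduleKP P)
    _ ≤ max C 0 * 1 := by gcongr; exacts [le_max_left _ _, norm_le_one_of_isLUB hP.1 m]
    _ = max C 0 := mul_one _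

lemma MemKP.tendsto_norm_comp_right {D : ℝ} {B : ℕ → Y →L[ℂ] Y} (hK : MemKP P K)
    (hB : ∀ n, ‖B n‖ ≤ D) (hBP : ∀ m, Tendsto (fun n => ‖(B n).comp (P m)‖) atTop (𝓝 0)) :
    Tendsto (fun n => ‖(B n).comp K‖) atTop (𝓝 0) := by
  refine tendsto_zero_of_forall_le_add_s16 (fun n => norm_nonneg _)
    (fun m => by simpa using (hBP m).mul_const ‖K‖) (by simpa using hK.2.const_mul D)
    fun m n => ?_
  calc ‖(B n).comp K‖ = ‖((B n).comp (P m)).comp K + (B n).comp ((Qop P m).comp K)‖ := by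
        rw [comp_assoc, ← comp_add, ← add_comp, add_Qop, id_comp]
    _ ≤ ‖(B n).comp (P m)‖ * ‖K‖ + D * ‖(Qop P m).comp K‖ :=
        norm_add_le_of_le (opNorm_comp_le _ _)
          ((opNorm_comp_le _ _).trans (by gcongr; exact hB n))

lemma MemKP.tendsto_norm_comp_left {D : ℝ} {B : ℕ → Y →L[ℂ] Y} (hK : MemKP P K)
    (hB : ∀ n, ‖B n‖ ≤ D) (hPB : ∀ m, Tendsto (fun n => ‖(P m).comp (B n)‖) atTop (𝓝 0)) :
    Tendsto (fun n => ‖K.comp (B n)‖) atTop (𝓝 0) := by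
  refine tendsto_zero_of_forall_le_add_s16 (fun n => norm_nonneg _)
    (fun m => by simpa using (hPB m).const_mul ‖K‖) (by simpa using hK.1.mul_const D)
    fun m n => ?_
  calc ‖K.comp (B n)‖ = ‖K.comp ((P m).comp (B n)) + (K.comp (Qop P m)).comp (B n)‖ := by
        rw [comp_assoc, ← comp_add, ← add_comp, add_Qop, id_comp]
    _ ≤ ‖K‖ * ‖(P m).comp (B n)‖ + ‖K.comp (Qop P m)‖ * D :=
        norm_add_le_of_le (opNorm_comp_le _ _)
          ((opNorm_comp_le _ _).trans (by gcongr; exact hB n))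

end KP

/-- `Aₙ` P-converges to `A` iff `(Aₙ)` is bounded and
`‖(Aₙ - A) Pₘ‖ → 0`, `‖Pₘ (Aₙ - A)‖ → 0` for every `m`. -/
theorem statement16 {Y : Type*} [NormedAddCommGroup Y] [NormedSpace ℂ Y] [CompleteSpace Y]
    (P : ℕ → Y →L[ℂ] Y) (hP : ApproxId P)
    (Aseq : ℕ → Y →L[ℂ] Y) (A : Y →L[ℂ] Y) :
    (∀ K : Y →L[ℂ] Y, MemKP P K →
      Tendsto (fun n => ‖(Aseq n - A).comp K‖) atTop (𝓝 0) ∧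
      Tendsto (fun n => ‖K.comp (Aseq n - A)‖) atTop (𝓝 0)) ↔
    ((∃ C : ℝ, ∀ n, ‖Aseq n‖ ≤ C) ∧
      ∀ m : ℕ,
        Tendsto (fun n => ‖(Aseq n - A).comp (P m)‖) atTop (𝓝 0) ∧
        Tendsto (fun n => ‖(P m).comp (Aseq n - A)‖) atTop (𝓝 0)) := by
  constructor
  · intro h
    obtain ⟨C, hC⟩ := hP.exists_norm_le_of_bounded_comp fun K hK =>
      let ⟨C, hC⟩ := (h K hK).2.bddAbove_range
      ⟨C, fun n => hC ⟨n, rfl⟩⟩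
    exact ⟨⟨C + ‖A‖, fun n => (norm_le_norm_sub_add _ A).trans (by gcongr; exact hC n)⟩,
      fun m => h (P m) (hP.memKP_s16 m)⟩
  · rintro ⟨⟨C, hC⟩, h⟩ K hK
    have hB (n : ℕ) : ‖Aseq n - A‖ ≤ C + ‖A‖ := (norm_sub_le _ _).trans (by gcongr; exact hC n)
    exact ⟨hK.tendsto_norm_comp_right hB fun m => (h m).1,
      hK.tendsto_norm_comp_left hB fun m => (h m).2⟩
end

section
/- Suppose A, B ∈ S(Y) are bijective, A⁻¹ ∈ S(Y), and A − B ∈ M(Y). Then B⁻¹ ∈ S(Y). -/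
open Filter Topology

/-
The inverse `B⁻¹` is bounded by the open mapping theorem. Put `y j := B⁻¹ (x j)` for a strictly convergent sequence `x j →s x₀`. Since `A⁻¹ A = I`, we have
`y = A⁻¹ (B y + (A - B) y) = A⁻¹ (x + (A - B) y)`. The Montel operator `A - B` makes `(A - B) y`
strictly convergent along a subsequence, so `A⁻¹ ∈ S(Y)` makes `y` strictly convergent to some
`w` along it, and `B ∈ S(Y)` together with uniqueness of strict limits forces `B w = x₀`.
As this holds for a further subsequence of every subsequence, `y →s B⁻¹ x₀`.
-/

section

variable {Y : Type*} [NormedAddCommGroup Y] [NormedSpace ℂ Y] {P : ℕ → Y →L[ℂ] Y}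

lemma ApproxId.eq_zero_of_forall_apply_eq_zero (hP : ApproxId P) {x : Y}
    (hx : ∀ n, P n x = 0) : x = 0 := by
  have hle : ‖x‖ ≤ 0 := (hP.1 x).2 <| by
    rintro _ ⟨n, rfl⟩
    simp [hx n]
  exact norm_le_zero_iff.mp hle

lemma sconv_iff {x : ℕ → Y} {x₀ : Y} :
    SConv P x x₀ ↔ (∃ C : ℝ, ∀ j, ‖x j‖ ≤ C) ∧
      ∀ m, Tendsto (fun j => P m (x j)) atTop (𝓝 (P m x₀)) := by
  simp only [SConv, map_sub, ← tendsto_iff_norm_sub_tendsto_zero]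

namespace SConv

variable {x k : ℕ → Y} {x₀ z : Y}

lemma tendsto_apply (h : SConv P x x₀) (m : ℕ) :
    Tendsto (fun j => P m (x j)) atTop (𝓝 (P m x₀)) :=
  (sconv_iff.mp h).2 m

lemma comp_tendsto (h : SConv P x x₀) {ns : ℕ → ℕ} (hns : Tendsto ns atTop atTop) :
    SConv P (x ∘ ns) x₀ := by
  obtain ⟨⟨C, hC⟩, hlim⟩ := h
  exact ⟨⟨C, fun j => hC _⟩, fun m => (hlim m).comp hns⟩

lemma add (hx : SConv P x x₀) (hk : SConv P k z) : SConv P (x + k) (x₀ + z) := by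
  obtain ⟨C, hC⟩ := hx.1
  obtain ⟨D, hD⟩ := hk.1
  refine sconv_iff.mpr ⟨⟨C + D, fun j => (norm_add_le _ _).trans (add_le_add (hC j) (hD j))⟩,
    fun m => ?_⟩
  simpa only [Pi.add_apply, map_add] using (hx.tendsto_apply m).add (hk.tendsto_apply m)

lemma unique (hsep : ∀ x : Y, (∀ n, P n x = 0) → x = 0) (ha : SConv P x x₀) (hb : SConv P x z) :
    x₀ = z :=
  sub_eq_zero.mp <| hsep _ fun m => by
    rw [map_sub, tendsto_nhds_unique (ha.tendsto_apply m) (hb.tendsto_apply m), sub_self]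

lemma of_forall_subseq (hbdd : ∃ C : ℝ, ∀ j, ‖x j‖ ≤ C)
    (h : ∀ ns : ℕ → ℕ, Tendsto ns atTop atTop → ∃ ms : ℕ → ℕ, SConv P (x ∘ ns ∘ ms) x₀) :
    SConv P x x₀ :=
  ⟨hbdd, fun m => tendsto_of_subseq_tendsto fun ns hns => by
    obtain ⟨ms, hms⟩ := h ns hns
    exact ⟨ms, hms.2 m⟩⟩

end SConv

variable {A B Ainv : Y →L[ℂ] Y}

lemma exists_subseq_sconv_of_memM_sub (hsep : ∀ x : Y, (∀ n, P n x = 0) → x = 0)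
    (hAinv : Ainv.comp A = ContinuousLinearMap.id ℂ Y) (hAinvS : MemS P Ainv)
    (hBS : MemS P B) (hM : MemM P (A - B))
    (hBinj : Function.Injective B) {y : ℕ → Y} {y₀ : Y}
    (hy : ∃ C : ℝ, ∀ j, ‖y j‖ ≤ C) (hBy : SConv P (B ∘ y) (B y₀)) :
    ∃ φ : ℕ → ℕ, StrictMono φ ∧ SConv P (y ∘ φ) y₀ := by
  obtain ⟨φ, z, hφ, hKy⟩ := hM y hy
  have hBy' : SConv P (B ∘ y ∘ φ) (B y₀) := hBy.comp_tendsto hφ.tendsto_atTop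
  have hy_eq : y ∘ φ = Ainv ∘ (B ∘ y ∘ φ + (A - B) ∘ y ∘ φ) := by
    funext i
    simp [← ContinuousLinearMap.comp_apply Ainv A, hAinv]
  have hyw : SConv P (y ∘ φ) (Ainv (B y₀ + z)) := hy_eq ▸ hAinvS _ _ (hBy'.add hKy)
  have hw : B (Ainv (B y₀ + z)) = B y₀ := (hBS _ _ hyw).unique hsep hBy'
  exact ⟨φ, hφ, hBinj hw ▸ hyw⟩

lemma memS_of_inverse_of_memM_sub (hsep : ∀ x : Y, (∀ n, P n x = 0) → x = 0)
    (hAinv : Ainv.comp A = ContinuousLinearMap.id ℂ Y) (hAinvS : MemS P Ainv)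
    (hBS : MemS P B) (hM : MemM P (A - B))
    {Binv : Y →L[ℂ] Y} (hleft : Function.LeftInverse Binv B)
    (hright : Function.RightInverse Binv B) : MemS P Binv := by
  intro x x₀ hx
  obtain ⟨C, hC⟩ := hx.1
  have hbdd : ∃ D : ℝ, ∀ j, ‖Binv (x j)‖ ≤ D :=
    ⟨‖Binv‖ * C, fun j => (Binv.le_opNorm _).trans (by gcongr; exact hC j)⟩
  refine SConv.of_forall_subseq hbdd fun ns hns => ?_
  have hBy : SConv P (B ∘ (Binv ∘ x ∘ ns)) (B (Binv x₀)) := by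
    simpa only [Function.comp_def, hright _] using hx.comp_tendsto hns
  obtain ⟨ms, -, hms⟩ := exists_subseq_sconv_of_memM_sub hsep hAinv hAinvS hBS hM
    hleft.injective (hbdd.imp fun _ hD j => hD (ns j)) hBy
  exact ⟨ms, hms⟩

end

theorem statement17_general {Y : Type*} [NormedAddCommGroup Y] [NormedSpace ℂ Y] [CompleteSpace Y]
    (P : ℕ → Y →L[ℂ] Y) (hP : ApproxId P)
    (A B : Y →L[ℂ] Y)
    (hBS : MemS P B)
    (hBbij : Function.Bijective B)
    (hAinv : ∃ Ainv : Y →L[ℂ] Y,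
      A.comp Ainv = ContinuousLinearMap.id ℂ Y ∧
      Ainv.comp A = ContinuousLinearMap.id ℂ Y ∧ MemS P Ainv)
    (hM : MemM P (A - B)) :
    ∃ Binv : Y →L[ℂ] Y,
      B.comp Binv = ContinuousLinearMap.id ℂ Y ∧
      Binv.comp B = ContinuousLinearMap.id ℂ Y ∧ MemS P Binv := by
  obtain ⟨Ainv, -, hAinv, hAinvS⟩ := hAinv
  let e := ContinuousLinearEquiv.ofBijective B (LinearMap.ker_eq_bot.mpr hBbij.1)
    (LinearMap.range_eq_top.mpr hBbij.2)
  refine ⟨e.symm, ContinuousLinearMap.ext e.apply_symm_apply,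
    ContinuousLinearMap.ext e.symm_apply_apply, ?_⟩
  exact memS_of_inverse_of_memM_sub (fun _ => hP.eq_zero_of_forall_apply_eq_zero) hAinv hAinvS
    hBS hM e.symm_apply_apply e.apply_symm_apply

/-- If `A, B ∈ S(Y)` are bijective, `A⁻¹ ∈ S(Y)` and
`A − B ∈ M(Y)`, then `B⁻¹ ∈ S(Y)`. -/
theorem statement17 {Y : Type*} [NormedAddCommGroup Y] [NormedSpace ℂ Y] [CompleteSpace Y]
    (P : ℕ → Y →L[ℂ] Y) (hP : ApproxId P)
    (A B : Y →L[ℂ] Y)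
    (hAS : MemS P A) (hBS : MemS P B)
    (hAbij : Function.Bijective A) (hBbij : Function.Bijective B)
    (hAinv : ∃ Ainv : Y →L[ℂ] Y,
      A.comp Ainv = ContinuousLinearMap.id ℂ Y ∧
      Ainv.comp A = ContinuousLinearMap.id ℂ Y ∧ MemS P Ainv)
    (hM : MemM P (A - B)) :
    ∃ Binv : Y →L[ℂ] Y,
      B.comp Binv = ContinuousLinearMap.id ℂ Y ∧
      Binv.comp B = ContinuousLinearMap.id ℂ Y ∧ MemS P Binv :=
  statement17_general P hP A B hBS hBbij hAinv hM
end
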